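/- arXiv:2408.06295 — 2 statements merged into one kernel-verified Lean document; each statement's English description precedes it below -/
import Mathlib

section
/- Let u_t be a positive integer, let u_e > 0, c_t > 0, c_e > 0 and φ > 0. Then (c_e^{u_e}/(2·Γ(u_e))) · ∫_0^∞ γ^{u_e/2 − 1} e^{−c_e √γ} · ( 1 − e^{−c_t √(φγ)} Σ_{η=0}^{u_t−1} (c_t √(φγ))^η / η! ) dγ = 1 − Σ_{η=0}^{u_t−1} (Γ(η+u_e)/(η!·Γ(u_e))) · (c_t √φ)^η · c_e^{u_e} / (c_t √φ + c_e)^{η+u_e}. -/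
/-!
Expanding the Erlang-type CDF of the main link into its finitely many Poisson terms, each term
times the eavesdropper density is again of the form `γ ^ (s / 2 - 1) * exp (-b * √γ)`, with `s`
shifted by `η` and `b` by `ct * √φ`. Since `√γ = γ ^ (1 / 2)`, such an integral is a Gamma
integral: `∫ γ ^ (s / 2 - 1) * exp (-b * √γ) = 2 * Γ(s) / b ^ s`.
-/

open MeasureTheory Real

lemma integrableOn_rpow_mul_exp_neg_mul_sqrt {q b : ℝ} (hq : -1 < q) (hb : 0 < b) :
    IntegrableOn (fun γ : ℝ => γ ^ q * exp (-b * √γ)) (Set.Ioi 0) := by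
  simpa only [sqrt_eq_rpow] using
    integrableOn_rpow_mul_exp_neg_mul_rpow hq (by norm_num : (0:ℝ) < 1 / 2) hb

lemma integral_rpow_mul_exp_neg_mul_sqrt {s b : ℝ} (hs : 0 < s) (hb : 0 < b) :
    ∫ γ in Set.Ioi (0:ℝ), γ ^ (s / 2 - 1) * exp (-b * √γ) = 2 * Gamma s / b ^ s := by
  simp only [sqrt_eq_rpow]
  rw [integral_rpow_mul_exp_neg_mul_rpow (by norm_num) (by linarith) hb,
    show -(s / 2 - 1 + 1) / (1 / 2) = -s by ring, show (s / 2 - 1 + 1) / (1 / 2) = s by ring,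
    rpow_neg hb.le]
  field_simp

lemma rpow_mul_exp_neg_mul_sqrt_mul_poisson_term {γ : ℝ} (hγ : 0 < γ) (s a b : ℝ) (n : ℕ) :
    γ ^ (s / 2 - 1) * exp (-b * √γ) * (exp (-a * √γ) * ((a * √γ) ^ n / n.factorial)) =
      a ^ n / n.factorial * (γ ^ ((n + s) / 2 - 1) * exp (-(a + b) * √γ)) := by
  have hpow : γ ^ ((n + s) / 2 - 1) = γ ^ (s / 2 - 1) * √γ ^ n := by
    rw [sqrt_eq_rpow, ← rpow_natCast, ← rpow_mul hγ.le, ← rpow_add hγ]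
    ring_nf
  rw [hpow, neg_add, add_mul, exp_add]
  ring

lemma integral_rpow_mul_exp_neg_mul_sqrt_mul_one_sub_poisson_sum {s a b : ℝ} (hs : 0 < s)
    (ha : 0 ≤ a) (hb : 0 < b) (N : ℕ) :
    ∫ γ in Set.Ioi (0:ℝ), γ ^ (s / 2 - 1) * exp (-b * √γ) *
        (1 - exp (-a * √γ) * ∑ n ∈ Finset.range N, (a * √γ) ^ n / n.factorial) =
      2 * Gamma s / b ^ s -
        ∑ n ∈ Finset.range N, a ^ n / n.factorial * (2 * Gamma (n + s) / (a + b) ^ ((n : ℝ) + s)) := by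
  have hab : 0 < a + b := by linarith
  have hterm (n : ℕ) : IntegrableOn
      (fun γ : ℝ => a ^ n / n.factorial * (γ ^ ((n + s) / 2 - 1) * exp (-(a + b) * √γ)))
      (Set.Ioi 0) :=
    (integrableOn_rpow_mul_exp_neg_mul_sqrt (by linarith [n.cast_nonneg' (α := ℝ)]) hab).const_mul _
  rw [setIntegral_congr_fun measurableSet_Ioi (g := fun γ => γ ^ (s / 2 - 1) * exp (-b * √γ) -
      ∑ n ∈ Finset.range N, a ^ n / n.factorial * (γ ^ ((n + s) / 2 - 1) * exp (-(a + b) * √γ)))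
      fun γ hγ => by
        simp only [mul_sub, mul_one, Finset.mul_sum, rpow_mul_exp_neg_mul_sqrt_mul_poisson_term hγ],
    integral_sub (integrableOn_rpow_mul_exp_neg_mul_sqrt (by linarith) hb)
      (integrable_finsetSum _ fun n _ => hterm n),
    integral_finsetSum _ fun n _ => hterm n, integral_rpow_mul_exp_neg_mul_sqrt hs hb]
  congr 1
  refine Finset.sum_congr rfl fun n _ => ?_
  rw [integral_const_mul, integral_rpow_mul_exp_neg_mul_sqrt (by positivity) hab]

theorem stmt_2_general (ut : ℕ) (ue ct ce φ : ℝ)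
    (hue : 0 < ue) (hct : 0 < ct) (hce : 0 < ce) (hφ : 0 < φ) :
    (ce ^ ue / (2 * Real.Gamma ue)) *
      ∫ γ in Set.Ioi (0:ℝ),
        γ ^ (ue / 2 - 1) * Real.exp (-ce * Real.sqrt γ) *
          (1 - Real.exp (-ct * Real.sqrt (φ * γ)) *
            ∑ η ∈ Finset.range ut, (ct * Real.sqrt (φ * γ)) ^ η / (Nat.factorial η : ℝ)) =
    1 - ∑ η ∈ Finset.range ut,
        (Real.Gamma (η + ue) / ((Nat.factorial η : ℝ) * Real.Gamma ue)) *
          (ct * Real.sqrt φ) ^ η * ce ^ ue / (ct * Real.sqrt φ + ce) ^ ((η : ℝ) + ue) := by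
  have hexp_arg (γ : ℝ) : -ct * √(φ * γ) = -(ct * √φ) * √γ := by rw [sqrt_mul hφ.le]; ring
  have hpow_base (γ : ℝ) : ct * √(φ * γ) = ct * √φ * √γ := by rw [sqrt_mul hφ.le]; ring
  have hGamma : Gamma ue ≠ 0 := (Gamma_pos_of_pos hue).ne'
  have hce_pow : ce ^ ue ≠ 0 := (rpow_pos_of_pos hce ue).ne'
  simp only [hexp_arg, hpow_base]
  rw [integral_rpow_mul_exp_neg_mul_sqrt_mul_one_sub_poisson_sum hue (by positivity) hce,
    mul_sub, Finset.mul_sum]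
  congr 1
  · field_simp
  · refine Finset.sum_congr rfl fun n _ => ?_
    field_simp

/-- The Scenario-III RF-hop secrecy integral in elementary form. -/
theorem stmt_2 (ut : ℕ) (hut : 0 < ut) (ue ct ce φ : ℝ)
    (hue : 0 < ue) (hct : 0 < ct) (hce : 0 < ce) (hφ : 0 < φ) :
    (ce ^ ue / (2 * Real.Gamma ue)) *
      ∫ γ in Set.Ioi (0:ℝ),
        γ ^ (ue / 2 - 1) * Real.exp (-ce * Real.sqrt γ) *
          (1 - Real.exp (-ct * Real.sqrt (φ * γ)) *
            ∑ η ∈ Finset.range ut, (ct * Real.sqrt (φ * γ)) ^ η / (Nat.factorial η : ℝ)) =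
    1 - ∑ η ∈ Finset.range ut,
        (Real.Gamma (η + ue) / ((Nat.factorial η : ℝ) * Real.Gamma ue)) *
          (ct * Real.sqrt φ) ^ η * ce ^ ue / (ct * Real.sqrt φ + ce) ^ ((η : ℝ) + ue) :=
  stmt_2_general ut ue ct ce φ hue hct hce hφ
end

section
/- Let X and Y be independent nonnegative random variables on a common probability space. Then E[ (ln(1+X) − ln(1+Y)) · 1_{X > Y} ] = ∫_0^∞ F_Y(γ)·(1 − F_X(γ))/(1+γ) dγ, where both sides are allowed to take the value +∞, F_X(γ) = P(X ≤ γ), and F_Y(γ) = P(Y ≤ γ). -/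
open MeasureTheory ProbabilityTheory Real
open scoped ProbabilityTheory ENNReal

lemma aux1 {a b : ℝ} (ha : 0 ≤ a) (hab : a < b) :
    ∫⁻ γ in Set.Ioc a b, ENNReal.ofReal (1 + γ)⁻¹ =
      ENNReal.ofReal (Real.log (1 + b) - Real.log (1 + a)) := by
  have hcont : ContinuousOn (fun γ : ℝ => (1 + γ)⁻¹) (Set.Icc a b) := by
    apply ContinuousOn.inv₀ (by fun_prop)
    intro x hx; nlinarith [hx.1]
  have hint : IntegrableOn (fun γ : ℝ => (1 + γ)⁻¹) (Set.Ioc a b) :=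
    (hcont.integrableOn_Icc).mono_set Set.Ioc_subset_Icc_self
  rw [← ofReal_integral_eq_lintegral_ofReal hint ?_]
  · congr 1
    rw [← intervalIntegral.integral_of_le hab.le]
    have h1 : ∀ x : ℝ, (1 + x)⁻¹ = (fun y : ℝ => 1 / y) (x + 1) := by
      intro x; simp [add_comm]
    calc ∫ x in a..b, (1 + x)⁻¹ = ∫ x in a..b, (fun y : ℝ => 1 / y) (x + 1) := by
          simp_rw [h1]
      _ = ∫ x in (a+1)..(b+1), 1 / x := intervalIntegral.integral_comp_add_right _ 1
      _ = Real.log ((b+1)/(a+1)) := by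
          apply integral_one_div
          intro h
          rw [Set.mem_uIcc] at h
          rcases h with ⟨h, _⟩ | ⟨h, _⟩ <;> linarith
      _ = Real.log (1 + b) - Real.log (1 + a) := by
          rw [Real.log_div (by linarith) (by linarith)]
          ring_nf
  · filter_upwards [ae_restrict_mem measurableSet_Ioc] with x hx
    have : (0:ℝ) < 1 + x := by linarith [hx.1]
    positivity

lemma cdf_aux {Ω : Type*} {m : MeasurableSpace Ω} (μ : MeasureTheory.Measure Ω)
    (Z : Ω → ℝ) (γ : ℝ) (h0 : μ {ω | Z ω = γ} = 0) :
    μ {ω | Z ω < γ} = μ {ω | Z ω ≤ γ} := by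
  apply le_antisymm (measure_mono fun ω (h : Z ω < γ) => le_of_lt h)
  calc μ {ω | Z ω ≤ γ} ≤ μ ({ω | Z ω < γ} ∪ {ω | Z ω = γ}) := by
        apply measure_mono
        intro ω h
        have h' : Z ω ≤ γ := h
        rcases lt_or_eq_of_le h' with h'' | h''
        · exact Or.inl h''
        · exact Or.inr h''
    _ ≤ μ {ω | Z ω < γ} + μ {ω | Z ω = γ} := measure_union_le _ _
    _ = μ {ω | Z ω < γ} := by rw [h0, add_zero]

/-- For independent nonnegative `X`, `Y`:
`E[(ln(1+X) - ln(1+Y)) 1_{X>Y}] = ∫_0^∞ F_Y(γ)(1 - F_X(γ))/(1+γ) dγ`,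
both sides possibly `+∞`. -/
theorem stmt_6 {Ω : Type*} [MeasureSpace Ω] [IsProbabilityMeasure (ℙ : Measure Ω)]
    (X Y : Ω → ℝ) (hX : Measurable X) (hY : Measurable Y)
    (hX0 : ∀ ω, 0 ≤ X ω) (hY0 : ∀ ω, 0 ≤ Y ω)
    (hind : IndepFun X Y) :
    ∫⁻ ω in {ω | Y ω < X ω},
        ENNReal.ofReal (Real.log (1 + X ω) - Real.log (1 + Y ω)) ∂ℙ =
      ∫⁻ γ in Set.Ioi (0:ℝ),
        ℙ {ω | Y ω ≤ γ} * (1 - ℙ {ω | X ω ≤ γ}) / ENNReal.ofReal (1 + γ) := by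
  set c : ℝ → ℝ≥0∞ := fun γ => ENNReal.ofReal (1 + γ)⁻¹ with hc
  set f : Ω × ℝ → ℝ≥0∞ :=
    Set.indicator {p : Ω × ℝ | Y p.1 < p.2 ∧ p.2 ≤ X p.1} (fun p => c p.2) with hf
  have hcm : Measurable c := by
    apply ENNReal.measurable_ofReal.comp
    exact ((measurable_const.add measurable_id).inv)
  have hsetm : MeasurableSet {p : Ω × ℝ | Y p.1 < p.2 ∧ p.2 ≤ X p.1} :=
    (measurableSet_lt (hY.comp measurable_fst) measurable_snd).inter
      (measurableSet_le measurable_snd (hX.comp measurable_fst))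
  have hfm : Measurable f := (hcm.comp measurable_snd).indicator hsetm
  -- Step A: LHS = iterated integral
  have stepA : ∫⁻ ω in {ω | Y ω < X ω},
      ENNReal.ofReal (Real.log (1 + X ω) - Real.log (1 + Y ω)) ∂ℙ =
      ∫⁻ ω, ∫⁻ γ in Set.Ioi (0:ℝ), f (ω, γ) ∂ℙ := by
    rw [← lintegral_indicator (measurableSet_lt hY hX)]
    apply lintegral_congr
    intro ω
    have hIoc : ∫⁻ γ in Set.Ioi (0:ℝ), f (ω, γ) =
        ∫⁻ γ in Set.Ioc (Y ω) (X ω), c γ := by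
      have : ∀ γ : ℝ, f (ω, γ) = Set.indicator (Set.Ioc (Y ω) (X ω)) c γ := by
        intro γ
        simp only [hf, Set.indicator_apply, Set.mem_setOf_eq, Set.mem_Ioc]
      simp_rw [this]
      rw [lintegral_indicator measurableSet_Ioc, Measure.restrict_restrict measurableSet_Ioc]
      have hsub : Set.Ioc (Y ω) (X ω) ∩ Set.Ioi (0:ℝ) = Set.Ioc (Y ω) (X ω) :=
        Set.inter_eq_left.mpr fun γ hγ => lt_of_le_of_lt (hY0 ω) hγ.1
      rw [hsub]
    rw [hIoc]
    by_cases h : Y ω < X ω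
    · rw [Set.indicator_apply, if_pos (show ω ∈ {a | Y a < X a} from h), aux1 (hY0 ω) h]
    · rw [Set.indicator_apply, if_neg (show ω ∉ {a | Y a < X a} from h)]
      have : Set.Ioc (Y ω) (X ω) = ∅ := Set.Ioc_eq_empty h
      rw [this]
      simp
  rw [stepA]
  -- Step B: Tonelli swap
  rw [lintegral_lintegral_swap (by exact hfm.aemeasurable)]
  -- Step C & D: inner integral via indicator const and independence, then a.e. congruence
  apply lintegral_congr_ae
  have hNY : Set.Countable {t : ℝ | 0 < ℙ {ω | Y ω = t}} :=
    Measure.countable_meas_level_set_pos hY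
  have hNX : Set.Countable {t : ℝ | 0 < ℙ {ω | X ω = t}} :=
    Measure.countable_meas_level_set_pos hX
  have hN0 : (volume : Measure ℝ)
      ({t : ℝ | 0 < ℙ {ω | Y ω = t}} ∪ {t : ℝ | 0 < ℙ {ω | X ω = t}}) = 0 :=
    (hNY.union hNX).measure_zero _
  have hae : ∀ᵐ γ ∂(volume.restrict (Set.Ioi (0:ℝ))),
      γ ∉ ({t : ℝ | 0 < ℙ {ω | Y ω = t}} ∪ {t : ℝ | 0 < ℙ {ω | X ω = t}}) := by
    exact ae_restrict_of_ae (measure_eq_zero_iff_ae_notMem.mp hN0)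
  filter_upwards [hae, ae_restrict_mem measurableSet_Ioi] with γ hγN hγ0
  rw [Set.mem_union, not_or] at hγN
  have hYγ : ℙ {ω | Y ω = γ} = 0 := by
    by_contra h
    exact hγN.1 (pos_iff_ne_zero.mpr h)
  have hXγ : ℙ {ω | X ω = γ} = 0 := by
    by_contra h
    exact hγN.2 (pos_iff_ne_zero.mpr h)
  -- inner integral
  have hinner : ∫⁻ ω, f (ω, γ) ∂ℙ = ℙ {ω | Y ω < γ ∧ γ ≤ X ω} * c γ := by
    have : ∀ ω, f (ω, γ) =
        Set.indicator {ω | Y ω < γ ∧ γ ≤ X ω} (fun _ => c γ) ω := by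
      intro ω
      simp only [hf, Set.indicator_apply, Set.mem_setOf_eq]
    simp_rw [this]
    have hms : MeasurableSet {ω | Y ω < γ ∧ γ ≤ X ω} :=
      (measurableSet_lt hY measurable_const).inter (measurableSet_le measurable_const hX)
    rw [lintegral_indicator_const hms, mul_comm]
  rw [hinner]
  -- independence
  have hindep : ℙ {ω | Y ω < γ ∧ γ ≤ X ω} = ℙ {ω | Y ω < γ} * ℙ {ω | γ ≤ X ω} := by
    have hset : {ω | Y ω < γ ∧ γ ≤ X ω} = Y ⁻¹' (Set.Iio γ) ∩ X ⁻¹' (Set.Ici γ) := rfl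
    rw [hset,
      hind.symm.measure_inter_preimage_eq_mul _ _ measurableSet_Iio measurableSet_Ici]
    rfl
  -- CDF identities
  have hYcdf : ℙ {ω | Y ω < γ} = ℙ {ω | Y ω ≤ γ} := cdf_aux ℙ Y γ hYγ
  have hXcdf : ℙ {ω | γ ≤ X ω} = 1 - ℙ {ω | X ω ≤ γ} := by
    have h1 : {ω | γ ≤ X ω} = {ω | X ω < γ}ᶜ := by
      ext ω; simp [not_lt]
    rw [h1, prob_compl_eq_one_sub (measurableSet_lt hX measurable_const),
      cdf_aux ℙ X γ hXγ]
  rw [hindep, hYcdf, hXcdf]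
  have h1γ : (0:ℝ) < 1 + γ := by have := Set.mem_Ioi.mp hγ0; linarith
  rw [div_eq_mul_inv, ← ENNReal.ofReal_inv_of_pos h1γ]
end
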